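/- arXiv:1401.3675 — 2 statements merged into one kernel-verified Lean document; each statement's English description precedes it below -/
import Mathlib

section
/- An ordinal one-sided matching mechanism is strategyproof if and only if it is swap monotonic, upper invariant, and lower invariant. -/
open Finset

/-- A (strict) preference type over `m` objects: rank `k` maps to the `k`-th choice. -/
abbrev Pref (m : ℕ) := Fin m ≃ Fin m

/-- `a` is strictly preferred to `b` under type `t` (smaller rank). -/
def Prefers {m : ℕ} (t : Pref m) (a b : Fin m) : Prop := t.symm a < t.symm b

/-- A vNM utility `u` is consistent with type `t`. -/
def Consistent {m : ℕ} (t : Pref m) (u : Fin m → ℝ) : Prop :=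
  ∀ a b : Fin m, Prefers t a b ↔ u b < u a

/-- Swap the objects at ranks `k` and `k'` in the preference order. -/
def swapRanks {m : ℕ} (t : Pref m) (k k' : Fin m) : Pref m := (Equiv.swap k k').trans t

/-- Expected utility of allocation (probability vector) `p` under utility `u`. -/
def EU {m : ℕ} (u p : Fin m → ℝ) : ℝ := ∑ j, u j * p j

/-- The mechanism outputs valid allocation matrices: entries nonnegative, rows sum to one,
column sums respect capacities `q`. -/
def ValidAlloc {n m : ℕ} (q : Fin m → ℕ) (f : (Fin n → Pref m) → Fin n → Fin m → ℝ) : Prop :=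
  ∀ t : Fin n → Pref m,
    (∀ i j, 0 ≤ f t i j) ∧ (∀ i, ∑ j, f t i j = 1) ∧ (∀ j, ∑ i, f t i j ≤ (q j : ℝ))

/-- Strategyproofness: truth-telling maximizes expected utility for every consistent utility. -/
def Strategyproof {n m : ℕ} (f : (Fin n → Pref m) → Fin n → Fin m → ℝ) : Prop :=
  ∀ (i : Fin n) (t : Fin n → Pref m) (t' : Pref m) (u : Fin m → ℝ),
    Consistent (t i) u → EU u (f (Function.update t i t') i) ≤ EU u (f t i)

/-- Upper invariance: an adjacent swap at ranks `k, k+1` leaves the allocation of every object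
strictly preferred to the `k`-th choice unchanged. -/
def UpperInvariant {n m : ℕ} (f : (Fin n → Pref m) → Fin n → Fin m → ℝ) : Prop :=
  ∀ (i : Fin n) (t : Fin n → Pref m) (k : Fin m) (h : k.val + 1 < m) (j : Fin m),
    Prefers (t i) j ((t i) k) →
    f (Function.update t i (swapRanks (t i) k ⟨k.val + 1, h⟩)) i j = f t i j

/-- Lower invariance: an adjacent swap at ranks `k, k+1` leaves the allocation of every object
ranked strictly below the `(k+1)`-st choice unchanged. -/
def LowerInvariant {n m : ℕ} (f : (Fin n → Pref m) → Fin n → Fin m → ℝ) : Prop :=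
  ∀ (i : Fin n) (t : Fin n → Pref m) (k : Fin m) (h : k.val + 1 < m) (j : Fin m),
    Prefers (t i) ((t i) ⟨k.val + 1, h⟩) j →
    f (Function.update t i (swapRanks (t i) k ⟨k.val + 1, h⟩)) i j = f t i j

/-- Swap monotonicity: upon an adjacent swap `a_k ≻ a_{k+1}` to `a_{k+1} ≻ a_k`, either the
agent's allocation is unchanged, or its probability for `a_k` strictly decreases and its
probability for `a_{k+1}` strictly increases. -/
def SwapMonotonic {n m : ℕ} (f : (Fin n → Pref m) → Fin n → Fin m → ℝ) : Prop :=
  ∀ (i : Fin n) (t : Fin n → Pref m) (k : Fin m) (h : k.val + 1 < m),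
    (∀ j, f (Function.update t i (swapRanks (t i) k ⟨k.val + 1, h⟩)) i j = f t i j) ∨
    (f (Function.update t i (swapRanks (t i) k ⟨k.val + 1, h⟩)) i ((t i) k) < f t i ((t i) k) ∧
     f t i ((t i) ⟨k.val + 1, h⟩) <
       f (Function.update t i (swapRanks (t i) k ⟨k.val + 1, h⟩)) i ((t i) ⟨k.val + 1, h⟩))

/-- Minimum value of a utility function. -/
noncomputable def umin {m : ℕ} (u : Fin m → ℝ) : ℝ := sInf (Set.range u)

/-- Uniformly relatively bounded indifference with bound `r`. -/
def URBI {m : ℕ} (r : ℝ) (u : Fin m → ℝ) : Prop :=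
  ∀ a b : Fin m, u b < u a → u b - umin u ≤ r * (u a - umin u)

/-- `r`-partial strategyproofness: truth-telling is optimal for every consistent utility
satisfying `URBI r`. -/
def PartialSP {n m : ℕ} (r : ℝ) (f : (Fin n → Pref m) → Fin n → Fin m → ℝ) : Prop :=
  ∀ (i : Fin n) (t : Fin n → Pref m) (t' : Pref m) (u : Fin m → ℝ),
    Consistent (t i) u → URBI r u →
    EU u (f (Function.update t i t') i) ≤ EU u (f t i)

/-- Cumulative probability of the weak upper contour set of `a` under type `t`. -/
def cumul {m : ℕ} (t : Pref m) (p : Fin m → ℝ) (a : Fin m) : ℝ :=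
  ∑ b ∈ Finset.univ.filter (fun b => t.symm b ≤ t.symm a), p b

/-- `p` strictly first order-stochastically dominates `q` with respect to type `t`. -/
def StochDom {m : ℕ} (t : Pref m) (p q : Fin m → ℝ) : Prop :=
  (∀ a, cumul t q a ≤ cumul t p a) ∧ (∃ a, cumul t q a < cumul t p a)

/-!
Write the change of agent `i`'s allocation under an adjacent swap of ranks `k, k + 1` as a vector
`D` indexed by ranks. Strategyproofness against every strictly decreasing utility on ranks makes
all prefix sums of `D` nonnegative, and strategyproofness of the swapped report against the
original one makes the prefix sums of `D ∘ swap k (k + 1)` nonpositive. Prefix sums that do not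
separate `k` from `k + 1` are the same for both vectors, hence vanish, so the swap can only move
probability from rank `k` to rank `k + 1`: this is swap monotonicity together with upper and
lower invariance.

Conversely, under the three axioms an adjacent swap that puts the truly better object first only
moves probability between the two swapped objects, towards the better one, in equal amounts
since rows sum to one; so it does not lower expected utility. Every misreport is turned into the
truth by such swaps, each of which removes one inversion with respect to the true type.
-/

section Ranks

variable {m : ℕ}

lemma swap_adjacent_lt_swap_iff {k k' : Fin m} (hk : k.val + 1 = k'.val) {r s : Fin m}
    (hrs : ¬(r = k ∧ s = k')) (hsr : ¬(r = k' ∧ s = k)) :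
    Equiv.swap k k' r < Equiv.swap k k' s ↔ r < s := by
  simp only [Equiv.swap_apply_def]
  rw [Fin.lt_def, Fin.lt_def]
  split_ifs <;> simp_all [Fin.ext_iff] <;> omega

lemma swap_adjacent_val_lt_iff {k k' : Fin m} (hk : k.val + 1 = k'.val) {l : ℕ}
    (hl : l ≠ k'.val) (r : Fin m) :
    (Equiv.swap k k' r).val < l ↔ r.val < l := by
  simp only [Equiv.swap_apply_def]
  split_ifs <;> simp_all [Fin.ext_iff] <;> omega

lemma nonneg_of_forall_pos_sub_mul {a c : ℝ} (h : ∀ ε > 0, 0 ≤ a - ε * c) : 0 ≤ a := by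
  have hlim : Filter.Tendsto (fun ε : ℝ => a - ε * c) (nhdsWithin 0 (Set.Ioi 0)) (nhds a) :=
    ((Continuous.tendsto' (f := fun ε : ℝ => a - ε * c) (by fun_prop) 0 a (by simp))).mono_left
      nhdsWithin_le_nhds
  exact ge_of_tendsto hlim (eventually_nhdsWithin_of_forall h)

lemma prefix_sum_nonneg_of_forall_strictAnti (D : Fin m → ℝ)
    (hD : ∀ v : Fin m → ℝ, StrictAnti v → 0 ≤ ∑ r, v r * D r) (l : ℕ) :
    0 ≤ ∑ r with r.val < l, D r := by
  -- test `D` against the indicator of the first `l` ranks, made strict by a small tilt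
  refine nonneg_of_forall_pos_sub_mul (c := ∑ r, (r.val : ℝ) * D r) fun ε hε => ?_
  have hv : StrictAnti fun r : Fin m => (if r.val < l then (1 : ℝ) else 0) - ε * r.val := by
    intro r s hrs
    rw [Fin.lt_def] at hrs
    have hind : (if s.val < l then (1 : ℝ) else 0) ≤ if r.val < l then 1 else 0 := by
      split_ifs <;> norm_num
      omega
    have htilt : ε * r.val < ε * s.val := by gcongr
    linarith
  convert hD _ hv using 1
  simp only [sub_mul, sum_sub_distrib, ite_mul, one_mul, zero_mul, sum_ite, sum_const_zero,
    add_zero, mul_sum, mul_assoc]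

lemma sum_val_lt_succ (D : Fin m → ℝ) (r : Fin m) :
    ∑ s with s.val < r.val + 1, D s = ∑ s with s.val < r.val, D s + D r := by
  have hset : univ.filter (fun s : Fin m => s.val < r.val + 1)
      = insert r (univ.filter fun s : Fin m => s.val < r.val) := by
    ext s
    simp only [mem_filter, mem_univ, true_and, mem_insert, Fin.ext_iff]
    omega
  rw [hset, sum_insert (by simp), add_comm]

lemma eq_of_prefix_sums_swap (D : Fin m → ℝ) {k : Fin m} (h : k.val + 1 < m)
    (hD : ∀ l, 0 ≤ ∑ r with r.val < l, D r)
    (hDswap : ∀ l, ∑ r with r.val < l, D (Equiv.swap k ⟨k.val + 1, h⟩ r) ≤ 0) :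
    (∀ r, r ≠ k → r ≠ ⟨k.val + 1, h⟩ → D r = 0) ∧ D ⟨k.val + 1, h⟩ = -D k ∧ 0 ≤ D k := by
  set S : ℕ → ℝ := fun l => ∑ r with r.val < l, D r
  have hS : ∀ l, l ≠ k.val + 1 → S l = 0 := by
    intro l hl
    refine le_antisymm ?_ (hD l)
    calc S l = ∑ r with r.val < l, D (Equiv.swap k ⟨k.val + 1, h⟩ r) :=
          (sum_equiv (Equiv.swap k ⟨k.val + 1, h⟩)
            (fun r => by simp [swap_adjacent_val_lt_iff (k' := ⟨k.val + 1, h⟩) rfl hl])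
            (fun _ _ => rfl)).symm
      _ ≤ 0 := hDswap l
  have hDS : ∀ r, D r = S (r.val + 1) - S r.val := fun r => by
    simp only [S, sum_val_lt_succ]; ring
  refine ⟨fun r hrk hrk' => ?_, ?_, ?_⟩
  · rw [hDS, hS, hS] <;> simp_all [Fin.ext_iff]
  · rw [hDS, hDS k, hS, hS k.val] <;> simp
  · rw [hDS, hS k.val (by simp), sub_zero]
    exact hD _

@[simp]
lemma swapRanks_symm_apply (ρ : Pref m) (k k' a : Fin m) :
    (swapRanks ρ k k').symm a = Equiv.swap k k' (ρ.symm a) := by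
  simp [swapRanks]

lemma prefers_swapRanks_iff {ρ : Pref m} {k : Fin m} (h : k.val + 1 < m) {a b : Fin m}
    (hab : ¬(a = ρ k ∧ b = ρ ⟨k.val + 1, h⟩)) (hba : ¬(a = ρ ⟨k.val + 1, h⟩ ∧ b = ρ k)) :
    Prefers (swapRanks ρ k ⟨k.val + 1, h⟩) a b ↔ Prefers ρ a b := by
  simp only [Prefers, swapRanks_symm_apply]
  exact swap_adjacent_lt_swap_iff rfl (by simpa [Equiv.symm_apply_eq] using hab)
    (by simpa [Equiv.symm_apply_eq] using hba)

lemma prefers_swapRanks_right_left (ρ : Pref m) {k : Fin m} (h : k.val + 1 < m) :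
    Prefers (swapRanks ρ k ⟨k.val + 1, h⟩) (ρ ⟨k.val + 1, h⟩) (ρ k) := by
  simp [Prefers, Fin.lt_def]

instance (t : Pref m) : DecidableRel (Prefers t) := fun a b =>
  inferInstanceAs (Decidable (t.symm a < t.symm b))

def inversions (σ ρ : Pref m) : Finset (Fin m × Fin m) :=
  univ.filter fun ab => Prefers σ ab.1 ab.2 ∧ Prefers ρ ab.2 ab.1

lemma inversions_swapRanks_ssubset {σ ρ : Pref m} {k : Fin m} (h : k.val + 1 < m)
    (hinv : Prefers σ (ρ ⟨k.val + 1, h⟩) (ρ k)) :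
    inversions σ (swapRanks ρ k ⟨k.val + 1, h⟩) ⊂ inversions σ ρ := by
  set k' : Fin m := ⟨k.val + 1, h⟩
  have hfixed : (ρ k', ρ k) ∉ inversions σ (swapRanks ρ k k') := by
    simp only [inversions, mem_filter, mem_univ, true_and, not_and]
    exact fun _ => (prefers_swapRanks_right_left ρ h).asymm
  refine ssubset_of_subset_of_ne (fun ⟨a, b⟩ hab => ?_) fun heq => hfixed ?_
  · simp only [inversions, mem_filter, mem_univ, true_and] at hab ⊢
    refine ⟨hab.1, (prefers_swapRanks_iff h ?_ ?_).1 hab.2⟩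
    · rintro ⟨rfl, rfl⟩
      exact hfixed (by simpa [inversions] using hab)
    · rintro ⟨rfl, rfl⟩
      exact hab.1.asymm hinv
  · rw [heq]
    simp only [inversions, mem_filter, mem_univ, true_and]
    exact ⟨hinv, by simp [Prefers, k', Fin.lt_def]⟩

lemma exists_adjacent_inversion {σ ρ : Pref m} (hne : ρ ≠ σ) :
    ∃ (k : Fin m) (h : k.val + 1 < m), Prefers σ (ρ ⟨k.val + 1, h⟩) (ρ k) := by
  cases m with
  | zero => exact absurd (Subsingleton.elim ρ σ) hne
  | succ n =>
    by_contra! hsorted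
    have hmono : StrictMono (σ.symm ∘ ρ) := Fin.strictMono_iff_lt_succ.2 fun r => by
      have hle := hsorted r.castSucc (by simp)
      simp only [Prefers, not_lt] at hle
      refine hle.lt_of_ne fun heq => ?_
      simpa [Fin.ext_iff] using ρ.injective (σ.symm.injective heq)
    exact hne (Equiv.ext fun r => by simpa using congrArg σ hmono.apply_eq)

end Ranks

open Function

section Mechanism

variable {n m : ℕ} {f : (Fin n → Pref m) → Fin n → Fin m → ℝ}

lemma consistent_comp_symm (σ : Pref m) {v : Fin m → ℝ} (hv : StrictAnti v) :
    Consistent σ (v ∘ σ.symm) :=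
  fun _ _ => hv.lt_iff_gt.symm

lemma Strategyproof.rank_sum_nonneg (hsp : Strategyproof f) (i : Fin n) (t : Fin n → Pref m)
    (t' : Pref m) {v : Fin m → ℝ} (hv : StrictAnti v) :
    0 ≤ ∑ r, v r * (f t i (t i r) - f (update t i t') i (t i r)) := by
  have hEU := hsp i t t' _ (consistent_comp_symm (t i) hv)
  simp only [EU, ← (t i).sum_comp fun j => (v ∘ (t i).symm) j * _] at hEU
  simpa [mul_sub] using hEU

lemma Strategyproof.apply_swapRanks (hsp : Strategyproof f) (i : Fin n) (t : Fin n → Pref m)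
    {k : Fin m} (h : k.val + 1 < m) :
    (∀ j, j ≠ t i k → j ≠ t i ⟨k.val + 1, h⟩ →
        f (update t i (swapRanks (t i) k ⟨k.val + 1, h⟩)) i j = f t i j) ∧
      f (update t i (swapRanks (t i) k ⟨k.val + 1, h⟩)) i (t i ⟨k.val + 1, h⟩)
          - f t i (t i ⟨k.val + 1, h⟩)
        = f t i (t i k) - f (update t i (swapRanks (t i) k ⟨k.val + 1, h⟩)) i (t i k) ∧
      f (update t i (swapRanks (t i) k ⟨k.val + 1, h⟩)) i (t i k) ≤ f t i (t i k) := by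
  set σ := t i
  set k' : Fin m := ⟨k.val + 1, h⟩
  set τ := swapRanks σ k k'
  set D : Fin m → ℝ := fun r => f t i (σ r) - f (update t i τ) i (σ r)
  have hD := prefix_sum_nonneg_of_forall_strictAnti D fun v hv => hsp.rank_sum_nonneg i t τ hv
  have hDswap : ∀ l, ∑ r with r.val < l, D (Equiv.swap k k' r) ≤ 0 := by
    intro l
    have hback := prefix_sum_nonneg_of_forall_strictAnti (fun r => -D (Equiv.swap k k' r))
      (fun v hv => by
        have hsum := hsp.rank_sum_nonneg i (update t i τ) σ hv
        rw [update_self, update_idem, update_eq_self] at hsum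
        simpa [D, τ, swapRanks] using hsum) l
    simpa [sum_neg_distrib] using hback
  obtain ⟨hoff, hpair, hmass⟩ := eq_of_prefix_sums_swap D h hD hDswap
  refine ⟨fun j hj hj' => ?_, ?_, ?_⟩
  · have hj0 := hoff (σ.symm j) (by rwa [ne_eq, Equiv.symm_apply_eq])
      (by rwa [ne_eq, Equiv.symm_apply_eq])
    simp only [D, Equiv.apply_symm_apply] at hj0
    linarith
  · simp only [D] at hpair
    linarith
  · simp only [D] at hmass
    linarith

lemma Strategyproof.swapMonotonic (hsp : Strategyproof f) : SwapMonotonic f := by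
  intro i t k h
  obtain ⟨hoff, hpair, hle⟩ := hsp.apply_swapRanks i t h
  rcases hle.eq_or_lt with heq | hlt
  · left
    intro j
    by_cases hjk : j = t i k
    · rw [hjk, heq]
    by_cases hjk' : j = t i ⟨k.val + 1, h⟩
    · rw [hjk']
      linarith
    exact hoff j hjk hjk'
  · exact Or.inr ⟨hlt, by linarith⟩

lemma Strategyproof.upperInvariant (hsp : Strategyproof f) : UpperInvariant f := by
  intro i t k h j hj
  simp only [Prefers, Equiv.symm_apply_apply] at hj
  refine (hsp.apply_swapRanks i t h).1 j ?_ ?_ <;> rintro rfl <;>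
    simp only [Equiv.symm_apply_apply, Fin.lt_def] at hj <;> omega

lemma Strategyproof.lowerInvariant (hsp : Strategyproof f) : LowerInvariant f := by
  intro i t k h j hj
  simp only [Prefers, Equiv.symm_apply_apply] at hj
  refine (hsp.apply_swapRanks i t h).1 j ?_ ?_ <;> rintro rfl <;>
    simp only [Equiv.symm_apply_apply, Fin.lt_def] at hj <;> omega

lemma apply_swapRanks_of_invariant (hui : UpperInvariant f) (hli : LowerInvariant f)
    (i : Fin n) (t : Fin n → Pref m) {k : Fin m} (h : k.val + 1 < m) {j : Fin m}
    (hjk : j ≠ t i k) (hjk' : j ≠ t i ⟨k.val + 1, h⟩) :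
    f (update t i (swapRanks (t i) k ⟨k.val + 1, h⟩)) i j = f t i j := by
  rw [ne_eq, ← Equiv.symm_apply_eq, Fin.ext_iff] at hjk hjk'
  dsimp only at hjk'
  rcases lt_or_gt_of_ne hjk with hlt | hgt
  · exact hui i t k h j (by rwa [Prefers, Equiv.symm_apply_apply, Fin.lt_def])
  · refine hli i t k h j ?_
    rw [Prefers, Equiv.symm_apply_apply, Fin.lt_def]
    dsimp only
    omega

lemma EU_sub_EU_of_eq_off_pair {u p p' : Fin m → ℝ} {x y : Fin m} (hxy : x ≠ y)
    (hsum : ∑ j, p' j = ∑ j, p j) (hoff : ∀ j, j ≠ x → j ≠ y → p' j = p j) :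
    EU u p' - EU u p = (u x - u y) * (p' x - p x) := by
  have hzero : ∀ j, j ≠ x ∧ j ≠ y → p' j - p j = 0 := fun j hj => by
    rw [hoff j hj.1 hj.2, sub_self]
  have hpair : (p' x - p x) + (p' y - p y) = 0 := by
    rw [← Fintype.sum_eq_add x y hxy hzero, sum_sub_distrib, hsum, sub_self]
  have hEU : EU u p' - EU u p = u x * (p' x - p x) + u y * (p' y - p y) := by
    simp only [EU, ← sum_sub_distrib, ← mul_sub]
    exact Fintype.sum_eq_add x y hxy fun j hj => by rw [hzero j hj, mul_zero]
  rw [hEU]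
  linear_combination u y * hpair

lemma EU_le_EU_swapRanks (hrows : ∀ t i, ∑ j, f t i j = 1) (hsm : SwapMonotonic f)
    (hui : UpperInvariant f) (hli : LowerInvariant f) (i : Fin n) (t : Fin n → Pref m)
    (u : Fin m → ℝ) (ρ : Pref m) {k : Fin m} (h : k.val + 1 < m)
    (hu : u (ρ k) ≤ u (ρ ⟨k.val + 1, h⟩)) :
    EU u (f (update t i ρ) i) ≤ EU u (f (update t i (swapRanks ρ k ⟨k.val + 1, h⟩)) i) := by
  set T := update t i ρ
  have hTi : T i = ρ := update_self ..
  have hT : update T i (swapRanks (T i) k ⟨k.val + 1, h⟩)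
      = update t i (swapRanks ρ k ⟨k.val + 1, h⟩) := by
    rw [hTi, update_idem]
  have hne : ρ k ≠ ρ ⟨k.val + 1, h⟩ := ρ.injective.ne (by simp [Fin.ext_iff])
  have hoff : ∀ j, j ≠ ρ k → j ≠ ρ ⟨k.val + 1, h⟩ →
      f (update t i (swapRanks ρ k ⟨k.val + 1, h⟩)) i j = f T i j := fun j hj hj' => by
    rw [← hT]
    exact apply_swapRanks_of_invariant hui hli i T h (by rwa [hTi]) (by rwa [hTi])
  rw [← sub_nonneg, EU_sub_EU_of_eq_off_pair hne (by rw [hrows, hrows]) hoff]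
  rcases hsm i T k h with hsame | ⟨hlt, -⟩
  · rw [hT] at hsame
    rw [hsame, sub_self, mul_zero]
  · rw [hT, hTi] at hlt
    exact mul_nonneg_of_nonpos_of_nonpos (by linarith) (by linarith)

lemma EU_update_le_of_axioms (hrows : ∀ t i, ∑ j, f t i j = 1) (hsm : SwapMonotonic f)
    (hui : UpperInvariant f) (hli : LowerInvariant f) (i : Fin n) (t : Fin n → Pref m)
    {u : Fin m → ℝ} (hu : Consistent (t i) u) (ρ : Pref m) :
    EU u (f (update t i ρ) i) ≤ EU u (f t i) := by
  by_cases hρ : ρ = t i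
  · rw [hρ, update_eq_self]
  obtain ⟨k, h, hinv⟩ := exists_adjacent_inversion hρ
  calc EU u (f (update t i ρ) i)
      ≤ EU u (f (update t i (swapRanks ρ k ⟨k.val + 1, h⟩)) i) :=
        EU_le_EU_swapRanks hrows hsm hui hli i t u ρ h ((hu _ _).1 hinv).le
    _ ≤ EU u (f t i) := EU_update_le_of_axioms hrows hsm hui hli i t hu _
termination_by (inversions (t i) ρ).card
decreasing_by exact card_lt_card (inversions_swapRanks_ssubset h hinv)

theorem Strategyproof.of_axioms (hrows : ∀ t i, ∑ j, f t i j = 1) (hsm : SwapMonotonic f)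
    (hui : UpperInvariant f) (hli : LowerInvariant f) : Strategyproof f :=
  fun i t t' _ hu => EU_update_le_of_axioms hrows hsm hui hli i t hu t'

end Mechanism

theorem sp_iff_axioms_general {n m : ℕ} (q : Fin m → ℕ)
    (f : (Fin n → Pref m) → Fin n → Fin m → ℝ) (hf : ValidAlloc q f) :
    Strategyproof f ↔ (SwapMonotonic f ∧ UpperInvariant f ∧ LowerInvariant f) :=
  ⟨fun hsp => ⟨hsp.swapMonotonic, hsp.upperInvariant, hsp.lowerInvariant⟩,
    fun ⟨hsm, hui, hli⟩ => .of_axioms (fun t i => (hf t).2.1 i) hsm hui hli⟩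

/-- a mechanism is strategyproof iff it is swap monotonic, upper invariant,
and lower invariant. -/
theorem sp_iff_axioms {n m : ℕ} (q : Fin m → ℕ) (hq : n ≤ ∑ j, q j)
    (f : (Fin n → Pref m) → Fin n → Fin m → ℝ) (hf : ValidAlloc q f) :
    Strategyproof f ↔ (SwapMonotonic f ∧ UpperInvariant f ∧ LowerInvariant f) :=
  sp_iff_axioms_general q f hf
end

section
/- If a mechanism f is r-partially strategyproof for some r ∈ (0,1], then f is upper invariant: swapping two adjacent objects in an agent's report never changes that agent's allocation of any object strictly preferred to both swapped objects. -/
open Finset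

/-! The utility that is geometric with ratio `r / 2` in the rank, and is moreover scaled down by
`ε` strictly below rank `l`, lies in `URBI r`. Comparing the truthful and a misreported allocation
under it and letting `ε → 0` shows that truth-telling weakly wins the weighted mass
`∑_{s ≤ l} (r / 2) ^ s * p (a_s)` of the top `l + 1` ranks. An adjacent swap at ranks `k, k + 1`
can be viewed from both sides (the swapped order is itself a type), and for `l < k` both orders
have the same top `l + 1` ranks, so these weighted masses agree; peeling off one rank at a time,
the probabilities of all objects above `a_k` agree. -/

theorem EU_sub {m : ℕ} (u p q : Fin m → ℝ) : EU u p - EU u q = EU u (p - q) := by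
  simp only [EU, ← sum_sub_distrib, Pi.sub_apply, mul_sub]

theorem EU_comp_symm {m : ℕ} (w : Fin m → ℝ) (E : Pref m) (x : Fin m → ℝ) :
    EU (w ∘ E.symm) x = ∑ s, w s * x (E s) := by
  rw [EU, ← E.sum_comp]
  simp

theorem umin_le {m : ℕ} (u : Fin m → ℝ) (a : Fin m) : umin u ≤ u a :=
  csInf_le (Set.finite_range u).bddBelow (Set.mem_range_self a)

theorem umin_nonneg {m : ℕ} {u : Fin m → ℝ} (hu : ∀ a, 0 ≤ u a) : 0 ≤ umin u :=
  Real.sInf_nonneg (by rintro _ ⟨a, rfl⟩; exact hu a)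

theorem consistent_comp_symm_s7 {m : ℕ} {w : Fin m → ℝ} (hw : StrictAnti w) (E : Pref m) :
    Consistent E (w ∘ E.symm) :=
  fun _ _ => hw.lt_iff_gt.symm

/-- Since `umin u ≤ u b ≤ (r / 2) u a ≤ u a / 2`, the gap above the minimum shrinks by at
least the factor `r`. -/
theorem urbi_of_le_half_mul {m : ℕ} {r : ℝ} {u : Fin m → ℝ} (hr0 : 0 ≤ r) (hr1 : r ≤ 1)
    (hu : ∀ a, 0 ≤ u a) (hdecay : ∀ a b, u b < u a → u b ≤ r / 2 * u a) : URBI r u := by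
  intro a b hba
  have hmin_nonneg := umin_nonneg hu
  have hmin_le := umin_le u b
  have hb := hdecay a b hba
  nlinarith [hu a]

theorem urbi_comp_symm {m : ℕ} {r : ℝ} {w : Fin m → ℝ} (hr0 : 0 ≤ r) (hr1 : r ≤ 1)
    (hw : StrictAnti w) (hw0 : ∀ s, 0 ≤ w s) (hdecay : ∀ s s', s < s' → w s' ≤ r / 2 * w s)
    (E : Pref m) : URBI r (w ∘ E.symm) :=
  urbi_of_le_half_mul hr0 hr1 (fun _ => hw0 _)
    (fun _ _ hba => hdecay _ _ (hw.lt_iff_gt.mp hba))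

noncomputable def rankUtility {m : ℕ} (r ε : ℝ) (l s : Fin m) : ℝ :=
  (if s ≤ l then 1 else ε) * (r / 2) ^ (s : ℕ)

section rankUtility

variable {m : ℕ} {r ε : ℝ} (l : Fin m)

theorem rankUtility_pos (hr : 0 < r) (hε : 0 < ε) (s : Fin m) : 0 < rankUtility r ε l s := by
  unfold rankUtility
  split_ifs <;> positivity

theorem rankUtility_le_half_mul (hr0 : 0 ≤ r) (hr1 : r ≤ 1) (hε0 : 0 ≤ ε) (hε1 : ε ≤ 1)
    {s s' : Fin m} (hss' : s < s') : rankUtility r ε l s' ≤ r / 2 * rankUtility r ε l s := by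
  have hcoeff : (if s' ≤ l then 1 else ε) ≤ (if s ≤ l then (1 : ℝ) else ε) := by
    split_ifs with h' h <;> first | exact le_rfl | exact hε1 | exact absurd (hss'.le.trans h') h
  have hpow : (r / 2) ^ (s' : ℕ) ≤ (r / 2) ^ ((s : ℕ) + 1) :=
    pow_le_pow_of_le_one (by positivity) (by linarith) hss'
  calc rankUtility r ε l s'
      ≤ (if s ≤ l then 1 else ε) * (r / 2) ^ ((s : ℕ) + 1) :=
        mul_le_mul hcoeff hpow (by positivity) (by split_ifs <;> linarith)
    _ = r / 2 * rankUtility r ε l s := by rw [rankUtility, pow_succ]; ring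

theorem rankUtility_strictAnti (hr0 : 0 < r) (hr1 : r ≤ 1) (hε0 : 0 < ε) (hε1 : ε ≤ 1) :
    StrictAnti (rankUtility (m := m) r ε l) := fun s s' hss' => by
  have hpos := rankUtility_pos l hr0 hε0 s
  have hdecay := rankUtility_le_half_mul l hr0.le hr1 hε0.le hε1 hss'
  nlinarith

end rankUtility

theorem sum_ite_one_mul {ι : Type*} [Fintype ι] (P : ι → Prop) [DecidablePred P] (ε : ℝ)
    (g : ι → ℝ) :
    ∑ i, (if P i then 1 else ε) * g i =
      ∑ i ∈ univ.filter P, g i + ε * ∑ i ∈ univ.filter (fun i => ¬ P i), g i := by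
  simp only [ite_mul, one_mul, sum_ite, mul_sum]

theorem nonneg_of_forall_add_mul_nonneg {c S : ℝ}
    (h : ∀ ε, 0 < ε → ε < 1 → 0 ≤ c + ε * S) : 0 ≤ c := by
  have hlim : Filter.Tendsto (fun ε => c + ε * S) (nhdsWithin 0 (Set.Ioi 0)) (nhds c) := by
    have : Continuous (fun ε : ℝ => c + ε * S) := by fun_prop
    simpa using (this.tendsto 0).mono_left nhdsWithin_le_nhds
  refine ge_of_tendsto hlim ?_
  filter_upwards [Ioo_mem_nhdsGT one_pos] with ε hε using h ε hε.1 hε.2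

theorem eq_zero_of_sum_Iic_eq_zero {ι M : Type*} [LinearOrder ι] [LocallyFiniteOrderBot ι]
    [WellFoundedLT ι] [AddCommMonoid M] {y : ι → M} {c : ι}
    (h : ∀ b < c, ∑ a ∈ Iic b, y a = 0) : ∀ b < c, y b = 0 := by
  intro b
  induction b using WellFoundedLT.induction with
  | _ b ih =>
    intro hb
    have hbelow : ∑ a ∈ Iio b, y a = 0 :=
      sum_eq_zero fun a ha => ih a (mem_Iio.mp ha) ((mem_Iio.mp ha).trans hb)
    have hb' := h b hb
    rwa [Iic_eq_cons_Iio, sum_cons, hbelow, add_zero] at hb'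

noncomputable def weightedPrefix {m : ℕ} (ρ : ℝ) (E : Pref m) (l : Fin m) (x : Fin m → ℝ) : ℝ :=
  ∑ s ∈ Iic l, ρ ^ (s : ℕ) * x (E s)

section weightedPrefix

variable {m : ℕ} {ρ : ℝ} {E : Pref m}

theorem weightedPrefix_neg (l : Fin m) (x : Fin m → ℝ) :
    weightedPrefix ρ E l (-x) = -weightedPrefix ρ E l x := by
  simp only [weightedPrefix, Pi.neg_apply, mul_neg, sum_neg_distrib]

theorem weightedPrefix_swapRanks {k k' l : Fin m} (hk : l < k) (hk' : l < k') (x : Fin m → ℝ) :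
    weightedPrefix ρ (swapRanks E k k') l x = weightedPrefix ρ E l x := by
  refine sum_congr rfl fun s hs => ?_
  have hsl := mem_Iic.mp hs
  rw [swapRanks, Equiv.trans_apply,
    Equiv.swap_apply_of_ne_of_ne (hsl.trans_lt hk).ne (hsl.trans_lt hk').ne]

theorem apply_eq_zero_of_weightedPrefix_eq_zero (hρ : ρ ≠ 0) {x : Fin m → ℝ} {k : Fin m}
    (h : ∀ l < k, weightedPrefix ρ E l x = 0) (s : Fin m) (hs : s < k) : x (E s) = 0 :=
  (mul_eq_zero.mp (eq_zero_of_sum_Iic_eq_zero h s hs)).resolve_left (pow_ne_zero _ hρ)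

end weightedPrefix

theorem weightedPrefix_nonneg_of_partialSP {n m : ℕ} {r : ℝ}
    {f : (Fin n → Pref m) → Fin n → Fin m → ℝ} (hr0 : 0 < r) (hr1 : r ≤ 1)
    (hpsp : PartialSP r f) (i : Fin n) (t : Fin n → Pref m) (t' : Pref m) (l : Fin m) :
    0 ≤ weightedPrefix (r / 2) (t i) l (f t i - f (Function.update t i t') i) := by
  set x := f t i - f (Function.update t i t') i
  refine nonneg_of_forall_add_mul_nonneg
    (S := ∑ s ∈ univ.filter (fun s => ¬ s ≤ l), (r / 2) ^ (s : ℕ) * x (t i s)) fun ε hε0 hε1 => ?_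
  have hw := rankUtility_strictAnti l hr0 hr1 hε0 hε1.le
  have hgain := hpsp i t t' (rankUtility r ε l ∘ (t i).symm) (consistent_comp_symm_s7 hw (t i))
    (urbi_comp_symm hr0.le hr1 hw (fun s => (rankUtility_pos l hr0 hε0 s).le)
      (fun _ _ => rankUtility_le_half_mul l hr0.le hr1 hε0.le hε1.le) (t i))
  calc 0 ≤ EU (rankUtility r ε l ∘ (t i).symm) (f t i)
        - EU (rankUtility r ε l ∘ (t i).symm) (f (Function.update t i t') i) := sub_nonneg.2 hgain
    _ = ∑ s, (if s ≤ l then 1 else ε) * ((r / 2) ^ (s : ℕ) * x (t i s)) := by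
      rw [EU_sub, EU_comp_symm]
      simp only [rankUtility, mul_assoc, x]
    _ = _ := by rw [sum_ite_one_mul, filter_ge_eq_Iic]; rfl

theorem psp_implies_upperInvariant_general {n m : ℕ}
    (f : (Fin n → Pref m) → Fin n → Fin m → ℝ)
    (r : ℝ) (h0 : 0 < r) (h1 : r ≤ 1) (hpsp : PartialSP r f) : UpperInvariant f := by
  intro i t k hk j hj
  set T' := swapRanks (t i) k ⟨k + 1, hk⟩
  have hgain := weightedPrefix_nonneg_of_partialSP h0 h1 hpsp i t T'
  have hloss := weightedPrefix_nonneg_of_partialSP h0 h1 hpsp i (Function.update t i T') (t i)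
  simp only [Function.update_self, Function.update_idem, Function.update_eq_self] at hloss
  have hzero : ∀ l < k, weightedPrefix (r / 2) (t i) l (f t i - f (Function.update t i T') i) = 0 :=
    fun l hl => by
      have hl' := hloss l
      rw [weightedPrefix_swapRanks hl (hl.trans (Fin.lt_def.2 (Nat.lt_succ_self _))), ← neg_sub,
        weightedPrefix_neg] at hl'
      linarith [hgain l]
  have hj' := apply_eq_zero_of_weightedPrefix_eq_zero (by positivity) hzero ((t i).symm j)
    (by simpa [Prefers] using hj)
  rw [Pi.sub_apply, Equiv.apply_symm_apply, sub_eq_zero] at hj'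
  exact hj'.symm

/-- r-partial strategyproofness (for some r ∈ (0,1]) implies upper invariance. -/
theorem psp_implies_upperInvariant {n m : ℕ} (q : Fin m → ℕ) (hq : n ≤ ∑ j, q j)
    (f : (Fin n → Pref m) → Fin n → Fin m → ℝ) (hf : ValidAlloc q f)
    (r : ℝ) (h0 : 0 < r) (h1 : r ≤ 1) (hpsp : PartialSP r f) : UpperInvariant f :=
  psp_implies_upperInvariant_general f r h0 h1 hpsp
end
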